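/- Under the recurrences q(s−u) = α^u + q(−1)(1−α)∑_{k=0}^{u−1} α^k for 0 < u < s, and q(−(f−v)) = q(1)·α·∑_{k=0}^{v−1}(1−α)^k for 0 < v < f, together with q(0) = α·q(1) + (1−α)·q(−1), the values q(1) and q(−1) satisfy q(1) = α^{s−1} + q(−1)(1−α)∑_{k=0}^{s−2} α^k and q(−1) = q(1)·α·∑_{k=0}^{f−2}(1−α)^k, and this 2×2 linear system has a unique solution whenever 0 < α < 1, s > 1, f > 1. -/

import Mathlib

/-!
Evaluating the two closed recurrences at the states adjacent to `0` (`u = s - 1`, `v = f - 1`)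
gives the system. By the geometric sum formula its two coupling coefficients are
`(1 - α) ∑_{k < s-1} α^k = 1 - α^(s-1)` and `α ∑_{k < f-1} (1 - α)^k = 1 - (1 - α)^(f-1)`,
both in `(0, 1)`, so their product is not `1` and the system is uniquely solvable.
-/

open Finset

lemma one_sub_mul_geom_sum_mem_Ioo {x : ℝ} (hx0 : 0 < x) (hx1 : x < 1) {n : ℕ} (hn : n ≠ 0) :
    (1 - x) * ∑ k ∈ range n, x ^ k ∈ Set.Ioo 0 1 := by
  rw [mul_neg_geom_sum]
  exact ⟨sub_pos.2 (pow_lt_one₀ hx0.le hx1 hn), sub_lt_self 1 (pow_pos hx0 n)⟩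

lemma mul_geom_sum_one_sub_mem_Ioo {x : ℝ} (hx0 : 0 < x) (hx1 : x < 1) {n : ℕ} (hn : n ≠ 0) :
    x * ∑ k ∈ range n, (1 - x) ^ k ∈ Set.Ioo 0 1 := by
  simpa using one_sub_mul_geom_sum_mem_Ioo (sub_pos.2 hx1) (sub_lt_self 1 hx0) hn

lemma existsUnique_coupled_linear_system {K : Type*} [Field K] (a b c : K) (hbc : b * c ≠ 1) :
    ∃! p : K × K, p.1 = a + p.2 * b ∧ p.2 = p.1 * c := by
  have hne : 1 - b * c ≠ 0 := sub_ne_zero.2 (Ne.symm hbc)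
  refine ⟨(a / (1 - b * c), a / (1 - b * c) * c), ⟨?_, rfl⟩, ?_⟩
  · field_simp
    ring
  · rintro ⟨x, y⟩ ⟨hx, hy⟩
    dsimp only at hx hy
    subst hy
    have hx' : x = a / (1 - b * c) := by
      rw [eq_div_iff hne]
      linear_combination hx
    rw [hx']

theorem stmt_6_general (α : ℝ) (hα0 : 0 < α) (hα1 : α < 1) (s f : ℕ) (hs : 1 < s) (hf : 1 < f)
    (q : ℤ → ℝ)
    (hup : ∀ u : ℕ, 0 < u → u < s →
        q ((s : ℤ) - u) = α ^ u + q (-1) * (1 - α) * (∑ k ∈ Finset.range u, α ^ k))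
    (hdown : ∀ v : ℕ, 0 < v → v < f →
        q (-((f : ℤ) - v)) = q 1 * α * (∑ k ∈ Finset.range v, (1 - α) ^ k)) :
    (q 1 = α ^ (s - 1) + q (-1) * (1 - α) * (∑ k ∈ Finset.range (s - 1), α ^ k) ∧
     q (-1) = q 1 * α * (∑ k ∈ Finset.range (f - 1), (1 - α) ^ k)) ∧
    (∃! p : ℝ × ℝ,
        p.1 = α ^ (s - 1) + p.2 * (1 - α) * (∑ k ∈ Finset.range (s - 1), α ^ k) ∧
        p.2 = p.1 * α * (∑ k ∈ Finset.range (f - 1), (1 - α) ^ k)) := by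
  have hup₁ := hup (s - 1) (by omega) (by omega)
  have hdown₁ := hdown (f - 1) (by omega) (by omega)
  rw [show (s : ℤ) - (s - 1 : ℕ) = 1 by omega] at hup₁
  rw [show -((f : ℤ) - (f - 1 : ℕ)) = -1 by omega] at hdown₁
  refine ⟨⟨hup₁, hdown₁⟩, ?_⟩
  have hb := one_sub_mul_geom_sum_mem_Ioo hα0 hα1 (n := s - 1) (by omega)
  have hc := mul_geom_sum_one_sub_mem_Ioo hα0 hα1 (n := f - 1) (by omega)
  simp only [mul_assoc]
  exact existsUnique_coupled_linear_system _ _ _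
    (mul_lt_one_of_nonneg_of_lt_one_left hb.1.le hb.2 hc.2.le).ne

/-- From the closed recurrences for the run-race absorption probabilities,
`q 1` and `q (-1)` satisfy the stated 2×2 linear system, and this system has a
unique solution whenever `0 < α < 1`, `s > 1`, `f > 1`. -/
theorem stmt_6 (α : ℝ) (hα0 : 0 < α) (hα1 : α < 1) (s f : ℕ) (hs : 1 < s) (hf : 1 < f)
    (q : ℤ → ℝ)
    (hup : ∀ u : ℕ, 0 < u → u < s →
        q ((s : ℤ) - u) = α ^ u + q (-1) * (1 - α) * (∑ k ∈ Finset.range u, α ^ k))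
    (hdown : ∀ v : ℕ, 0 < v → v < f →
        q (-((f : ℤ) - v)) = q 1 * α * (∑ k ∈ Finset.range v, (1 - α) ^ k))
    (h0 : q 0 = α * q 1 + (1 - α) * q (-1)) :
    (q 1 = α ^ (s - 1) + q (-1) * (1 - α) * (∑ k ∈ Finset.range (s - 1), α ^ k) ∧
     q (-1) = q 1 * α * (∑ k ∈ Finset.range (f - 1), (1 - α) ^ k)) ∧
    (∃! p : ℝ × ℝ,
        p.1 = α ^ (s - 1) + p.2 * (1 - α) * (∑ k ∈ Finset.range (s - 1), α ^ k) ∧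
        p.2 = p.1 * α * (∑ k ∈ Finset.range (f - 1), (1 - α) ^ k)) :=
  stmt_6_general α hα0 hα1 s f hs hf q hup hdown
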